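/- Under the assumptions of the Point-SAGA single-step Lyapunov descent theorem (each f_i L-smooth and μ-strongly convex, 0 < μ < L, step size γ and κ = μγ/(1+μγ) as there, initialization g_i^0 = ∇f_i(x^0)), the iterates satisfy E‖x^k - x*‖² ≤ (1-κ)^k · ((μ+L)/μ) · ‖x^0 - x*‖². -/

import Mathlib

open RealInnerProductSpace Finset

/-- `p` is the proximal point `prox_{γ f}(x)`. -/
def IsProx {d : ℕ} (γ : ℝ) (f : EuclideanSpace ℝ (Fin d) → ℝ)
    (x p : EuclideanSpace ℝ (Fin d)) : Prop :=
  ∀ y, γ * f p + ‖x - p‖ ^ 2 / 2 ≤ γ * f y + ‖x - y‖ ^ 2 / 2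

/-!
Every `f i` is `μ`-strongly convex with `L`-Lipschitz gradient, so its gradient is coercive:
`‖∇f x - ∇f y‖² + μL‖x - y‖² ≤ (μ + L)⟪∇f x - ∇f y, x - y⟫` (apply co-coercivity of the convex
function `f - μ/2‖·‖²`). A Point-SAGA step from `z` is a proximal step, so the new iterate `p`
satisfies `z = p + γ∇f_j p` and the refreshed table entry is `∇f_j p`; coercivity contracts
`(1/(μLn))‖∇f_j p - ∇f_j x*‖² + ‖p - x*‖²` by the factor `1 + μγ` against `‖z - x* - γ∇f_j x*‖²`.
Averaged over `j`, the vectors `(g_j - ∇f_j x*) - mean g` have mean zero (as `∑ ∇f_i x* = 0`) and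
second moment at most that of `g - ∇f x*`, and since `γ` is the positive root of
`μLnγ² + (n - 1)μγ = 1` the remaining terms of the Lyapunov function `T` recombine into
`E[T^{k+1}] ≤ (1 - κ) T^k`. Expectations over the sampled indices are averages over the histories
`Fin k → Fin n`.
-/

open scoped Gradient

variable {E : Type*} [NormedAddCommGroup E] [InnerProductSpace ℝ E]

theorem norm_add_smul_sq_ge_of_coercive {a b : E} {μ L γ c : ℝ} (hμ : 0 < μ) (hμL : μ ≤ L)
    (hγ : 0 ≤ γ) (hcoef : (1 + μ * γ) * c * (μ + L) ≤ γ ^ 2 * (μ + L) + 2 * γ)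
    (hab : ‖b‖ ^ 2 + μ * L * ‖a‖ ^ 2 ≤ (μ + L) * ⟪b, a⟫) :
    (1 + μ * γ) * (c * ‖b‖ ^ 2 + ‖a‖ ^ 2) ≤ ‖a + γ • b‖ ^ 2 := by
  have hexp : ‖a + γ • b‖ ^ 2 = ‖a‖ ^ 2 + 2 * γ * ⟪b, a⟫ + γ ^ 2 * ‖b‖ ^ 2 := by
    rw [norm_add_sq_real, real_inner_smul_right, norm_smul, mul_pow, Real.norm_eq_abs, sq_abs,
      real_inner_comm]
    ring
  rw [hexp, ← mul_le_mul_iff_right₀ (by linarith : 0 < μ + L)]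
  have h1 := mul_le_mul_of_nonneg_left hab (by positivity : 0 ≤ 2 * γ)
  have h2 := mul_le_mul_of_nonneg_right hcoef (sq_nonneg ‖b‖)
  have h3 : 0 ≤ γ * μ * (L - μ) * ‖a‖ ^ 2 := by
    have := sub_nonneg.mpr hμL
    positivity
  nlinarith

theorem sum_norm_add_smul_sub_mean_sq_le {ι : Type*} [Fintype ι] (a : E) (γ : ℝ) (h : ι → E) :
    ∑ j, ‖a + γ • (h j - (Fintype.card ι : ℝ)⁻¹ • ∑ i, h i)‖ ^ 2 ≤
      Fintype.card ι * ‖a‖ ^ 2 + γ ^ 2 * ∑ j, ‖h j‖ ^ 2 := by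
  set N : ℝ := (Fintype.card ι : ℝ)
  set w := N⁻¹ • ∑ i, h i
  have hsum : ∑ i, h i = N • w := by
    rcases eq_or_ne N 0 with hN | hN
    · have : IsEmpty ι := Fintype.card_eq_zero_iff.mp (Nat.cast_eq_zero.mp hN)
      rw [univ_eq_empty, sum_empty, hN, zero_smul]
    · rw [smul_smul, mul_inv_cancel₀ hN, one_smul]
  have hcentred : ∑ j, (h j - w) = 0 := by
    rw [sum_sub_distrib, hsum, sum_const, card_univ, ← Nat.cast_smul_eq_nsmul ℝ, sub_self]
  have hvar : ∑ j, ‖h j - w‖ ^ 2 = ∑ j, ‖h j‖ ^ 2 - N * ‖w‖ ^ 2 := by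
    simp only [norm_sub_sq_real, sum_add_distrib, sum_sub_distrib, ← sum_inner, hsum,
      ← mul_sum, sum_const, card_univ, nsmul_eq_mul, real_inner_smul_left,
      real_inner_self_eq_norm_sq]
    ring
  simp only [norm_add_sq_real, norm_smul, mul_pow, Real.norm_eq_abs, sq_abs, inner_smul_right,
    sum_add_distrib, ← mul_sum, ← inner_sum, hcentred, inner_zero_right, hvar, sum_const,
    card_univ, nsmul_eq_mul]
  have hN : 0 ≤ N := Nat.cast_nonneg _
  nlinarith [mul_nonneg (sq_nonneg γ) (mul_nonneg hN (sq_nonneg ‖w‖))]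

section Smooth

variable [CompleteSpace E] {f g : E → ℝ} {f' g' x : E}

theorem HasGradientAt.add (hf : HasGradientAt f f' x) (hg : HasGradientAt g g' x) :
    HasGradientAt (fun y => f y + g y) (f' + g') x := by
  rw [hasGradientAt_iff_hasFDerivAt, map_add]
  exact hf.hasFDerivAt.add hg.hasFDerivAt

theorem HasGradientAt.sub (hf : HasGradientAt f f' x) (hg : HasGradientAt g g' x) :
    HasGradientAt (fun y => f y - g y) (f' - g') x := by
  rw [hasGradientAt_iff_hasFDerivAt, map_sub]
  exact hf.hasFDerivAt.sub hg.hasFDerivAt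

theorem HasGradientAt.const_mul (c : ℝ) (hf : HasGradientAt f f' x) :
    HasGradientAt (fun y => c * f y) (c • f') x := by
  rw [hasGradientAt_iff_hasFDerivAt, map_smul]
  exact hf.hasFDerivAt.const_mul c

theorem HasGradientAt.sum {ι : Type*} (s : Finset ι) {F : ι → E → ℝ} {F' : ι → E}
    (hF : ∀ i ∈ s, HasGradientAt (F i) (F' i) x) :
    HasGradientAt (fun y => ∑ i ∈ s, F i y) (∑ i ∈ s, F' i) x := by
  rw [hasGradientAt_iff_hasFDerivAt, map_sum]
  exact HasFDerivAt.fun_sum fun i hi => (hF i hi).hasFDerivAt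

theorem hasGradientAt_norm_sub_sq_div_two (z x : E) :
    HasGradientAt (fun y => ‖y - z‖ ^ 2 / 2) (x - z) x := by
  rw [hasGradientAt_iff_hasFDerivAt]
  simp_rw [div_eq_inv_mul]
  refine (((hasFDerivAt_id x).sub_const z).norm_sq.const_mul (2 : ℝ)⁻¹).congr_fderiv ?_
  ext w
  simp

theorem IsLocalMin.hasGradientAt_eq_zero (hmin : IsLocalMin f x) (hf : HasGradientAt f f' x) :
    f' = 0 := by
  have h := hmin.hasFDerivAt_eq_zero (hasGradientAt_iff_hasFDerivAt.mp hf)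
  simpa using h

theorem HasGradientAt.hasDerivAt_comp_add_smul {v : E} {t : ℝ}
    (hf : HasGradientAt f f' (x + t • v)) :
    HasDerivAt (fun s : ℝ => f (x + s • v)) ⟪f', v⟫ t := by
  have hline : HasDerivAt (fun s : ℝ => x + s • v) v t := by
    simpa using ((hasDerivAt_id t).smul_const v).const_add x
  exact hf.hasFDerivAt.comp_hasDerivAt t hline

theorem ConvexOn.add_inner_le (hf : ConvexOn ℝ Set.univ f) (hf' : HasGradientAt f f' x) (y : E) :
    f x + ⟪f', y - x⟫ ≤ f y := by
  have hline : ConvexOn ℝ Set.univ (fun t : ℝ => f (x + t • (y - x))) := by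
    have h := hf.comp_affineMap (AffineMap.lineMap x y)
    have e : f ∘ AffineMap.lineMap x y = fun t : ℝ => f (x + t • (y - x)) := by
      ext t
      simp [AffineMap.lineMap_apply, add_comm]
    simpa [e] using h
  have hderiv : HasDerivAt (fun t : ℝ => f (x + t • (y - x))) ⟪f', y - x⟫ 0 :=
    HasGradientAt.hasDerivAt_comp_add_smul (by simpa using hf')
  have hslope := hline.le_slope_of_hasDerivAt (Set.mem_univ 0) (Set.mem_univ 1) one_pos hderiv
  simp [slope_def_field] at hslope
  linarith

theorem le_add_inner_add_of_lipschitz_gradient {C : ℝ} (hf : Differentiable ℝ f)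
    (hC : ∀ a b, ‖∇ f a - ∇ f b‖ ≤ C * ‖a - b‖) (x y : E) :
    f y ≤ f x + ⟪∇ f x, y - x⟫ + C / 2 * ‖y - x‖ ^ 2 := by
  set v := y - x
  let u : ℝ → ℝ := fun t => f (x + t • v) - t * ⟪∇ f x, v⟫ - C * t ^ 2 / 2 * ‖v‖ ^ 2
  have hu : ∀ t, HasDerivAt u (⟪∇ f (x + t • v), v⟫ - ⟪∇ f x, v⟫ - C * t * ‖v‖ ^ 2) t := by
    intro t
    have hlin : HasDerivAt (fun s : ℝ => s * ⟪∇ f x, v⟫) ⟪∇ f x, v⟫ t := by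
      simpa using (hasDerivAt_id t).mul_const ⟪∇ f x, v⟫
    have hsq : HasDerivAt (fun s : ℝ => C * s ^ 2 / 2 * ‖v‖ ^ 2) (C * t * ‖v‖ ^ 2) t := by
      have hpow : HasDerivAt (fun s : ℝ => s ^ 2) (2 * t) t := by simpa using hasDerivAt_pow 2 t
      exact (((hpow.const_mul C).div_const 2).mul_const (‖v‖ ^ 2)).congr_deriv (by ring)
    exact (((hf _).hasGradientAt.hasDerivAt_comp_add_smul).sub hlin).sub hsq
  have hanti : AntitoneOn u (Set.Icc 0 1) := by
    refine antitoneOn_of_deriv_nonpos (convex_Icc 0 1) (HasDerivAt.continuousOn fun t _ => hu t)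
      (fun t _ => (hu t).differentiableAt.differentiableWithinAt) ?_
    intro t ht
    rw [interior_Icc] at ht
    have hinner : ⟪∇ f (x + t • v) - ∇ f x, v⟫ ≤ C * t * ‖v‖ ^ 2 :=
      calc ⟪∇ f (x + t • v) - ∇ f x, v⟫ ≤ ‖∇ f (x + t • v) - ∇ f x‖ * ‖v‖ :=
            real_inner_le_norm _ _
        _ ≤ C * ‖(x + t • v) - x‖ * ‖v‖ := by gcongr; exact hC _ _
        _ = C * t * ‖v‖ ^ 2 := by
          rw [add_sub_cancel_left, norm_smul, Real.norm_of_nonneg ht.1.le]; ring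
    rw [(hu t).deriv, ← inner_sub_left]
    linarith
  have h01 := hanti (Set.left_mem_Icc.2 zero_le_one) (Set.right_mem_Icc.2 zero_le_one) zero_le_one
  simp only [u, v, one_smul, zero_smul, add_zero, add_sub_cancel] at h01
  linarith

theorem ConvexOn.add_inner_add_norm_sq_le {M : ℝ} (hf : ConvexOn ℝ Set.univ f)
    (hd : Differentiable ℝ f) (hM : 0 < M)
    (hdesc : ∀ a b, f b ≤ f a + ⟪∇ f a, b - a⟫ + M / 2 * ‖b - a‖ ^ 2) (x y : E) :
    f x + ⟪∇ f x, y - x⟫ + 1 / (2 * M) * ‖∇ f y - ∇ f x‖ ^ 2 ≤ f y := by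
  -- evaluate the lower bound at `x` and the descent bound at `y` at the gradient step `z` from `y`
  set Δ := ∇ f y - ∇ f x
  set z := y - M⁻¹ • Δ
  have hlow := hf.add_inner_le (hd x).hasGradientAt z
  have hup := hdesc y z
  have hzy : z - y = -(M⁻¹ • Δ) := by simp [z]
  have hzx : z - x = (y - x) - M⁻¹ • Δ := by simp only [z]; abel
  rw [hzx, inner_sub_right, real_inner_smul_right] at hlow
  rw [hzy, inner_neg_right, real_inner_smul_right, norm_neg, norm_smul, mul_pow,
    Real.norm_eq_abs, sq_abs] at hup
  have hΔ : ⟪∇ f y, Δ⟫ - ⟪∇ f x, Δ⟫ = ‖Δ‖ ^ 2 := by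
    rw [← inner_sub_left, real_inner_self_eq_norm_sq]
  have hquad : M / 2 * (M⁻¹ ^ 2 * ‖Δ‖ ^ 2) = 1 / (2 * M) * ‖Δ‖ ^ 2 := by
    field_simp
  have hlin : M⁻¹ * ⟪∇ f y, Δ⟫ = M⁻¹ * ⟪∇ f x, Δ⟫ + 2 * (1 / (2 * M) * ‖Δ‖ ^ 2) := by
    rw [← hΔ]; ring
  linarith

theorem ConvexOn.norm_sq_gradient_sub_le {M : ℝ} (hf : ConvexOn ℝ Set.univ f)
    (hd : Differentiable ℝ f) (hM : 0 < M)
    (hdesc : ∀ a b, f b ≤ f a + ⟪∇ f a, b - a⟫ + M / 2 * ‖b - a‖ ^ 2) (x y : E) :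
    ‖∇ f x - ∇ f y‖ ^ 2 ≤ M * ⟪∇ f x - ∇ f y, x - y⟫ := by
  have hxy := hf.add_inner_add_norm_sq_le hd hM hdesc x y
  have hyx := hf.add_inner_add_norm_sq_le hd hM hdesc y x
  have hsum : ⟪∇ f x, y - x⟫ + ⟪∇ f y, x - y⟫ = -⟪∇ f x - ∇ f y, x - y⟫ := by
    rw [← neg_sub x y, inner_neg_right, inner_sub_left]; ring
  rw [norm_sub_rev] at hxy
  have : 1 / M * ‖∇ f x - ∇ f y‖ ^ 2 ≤ ⟪∇ f x - ∇ f y, x - y⟫ := by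
    have : 1 / M * ‖∇ f x - ∇ f y‖ ^ 2 = 2 * (1 / (2 * M) * ‖∇ f x - ∇ f y‖ ^ 2) := by ring
    linarith
  rwa [one_div, inv_mul_le_iff₀ hM] at this

theorem StrongConvexOn.norm_sq_gradient_sub_add_le {f : E → ℝ} {μ L : ℝ}
    (hf : StrongConvexOn Set.univ μ f) (hd : Differentiable ℝ f) (hμL : μ < L)
    (hL : ∀ a b, ‖∇ f a - ∇ f b‖ ≤ L * ‖a - b‖) (x y : E) :
    ‖∇ f x - ∇ f y‖ ^ 2 + μ * L * ‖x - y‖ ^ 2 ≤ (μ + L) * ⟪∇ f x - ∇ f y, x - y⟫ := by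
  -- `ψ = f - μ/2 ‖·‖²` is convex and satisfies the descent lemma with constant `L - μ`
  set ψ : E → ℝ := fun z => f z - μ / 2 * ‖z‖ ^ 2
  have hψ : ConvexOn ℝ Set.univ ψ := strongConvexOn_iff_convex.mp hf
  have hψ' : ∀ w, HasGradientAt ψ (∇ f w - μ • w) w := by
    intro w
    have h := (hd w).hasGradientAt.sub ((hasGradientAt_norm_sub_sq_div_two 0 w).const_mul μ)
    convert h using 2 with z
    · simp only [ψ, sub_zero]; ring
    · rw [sub_zero]
  have hψd : Differentiable ℝ ψ := fun w => (hψ' w).differentiableAt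
  have hψdesc : ∀ a b, ψ b ≤ ψ a + ⟪∇ ψ a, b - a⟫ + (L - μ) / 2 * ‖b - a‖ ^ 2 := by
    intro a b
    have hdesc := le_add_inner_add_of_lipschitz_gradient hd hL a b
    have hb : ‖b‖ ^ 2 = ‖a‖ ^ 2 + 2 * ⟪a, b - a⟫ + ‖b - a‖ ^ 2 := by
      rw [← norm_add_sq_real, add_sub_cancel]
    simp only [ψ, (hψ' a).gradient, inner_sub_left, real_inner_smul_left, hb]
    linarith
  have hco := hψ.norm_sq_gradient_sub_le hψd (sub_pos.mpr hμL) hψdesc x y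
  have hdiff : ∇ ψ x - ∇ ψ y = (∇ f x - ∇ f y) - μ • (x - y) := by
    rw [(hψ' x).gradient, (hψ' y).gradient, smul_sub]; abel
  have hnorm : ‖(∇ f x - ∇ f y) - μ • (x - y)‖ ^ 2 =
      ‖∇ f x - ∇ f y‖ ^ 2 - 2 * μ * ⟪∇ f x - ∇ f y, x - y⟫ + μ ^ 2 * ‖x - y‖ ^ 2 := by
    rw [norm_sub_sq_real, real_inner_smul_right, norm_smul, mul_pow, Real.norm_eq_abs, sq_abs]
    ring
  have hinner : ⟪(∇ f x - ∇ f y) - μ • (x - y), x - y⟫ =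
      ⟪∇ f x - ∇ f y, x - y⟫ - μ * ‖x - y‖ ^ 2 := by
    rw [inner_sub_left, real_inner_smul_left, real_inner_self_eq_norm_sq]
  rw [hdiff, hnorm, hinner] at hco
  linarith

theorem StrongConvexOn.prox_contraction {f : E → ℝ} {μ L γ c : ℝ}
    (hf : StrongConvexOn Set.univ μ f) (hd : Differentiable ℝ f) (hμ : 0 < μ) (hμL : μ < L)
    (hL : ∀ a b, ‖∇ f a - ∇ f b‖ ≤ L * ‖a - b‖) (hγ : 0 ≤ γ)
    (hcoef : (1 + μ * γ) * c * (μ + L) ≤ γ ^ 2 * (μ + L) + 2 * γ) {z p xs : E}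
    (hp : p + γ • ∇ f p = z) :
    (1 + μ * γ) * (c * ‖∇ f p - ∇ f xs‖ ^ 2 + ‖p - xs‖ ^ 2) ≤ ‖z - xs - γ • ∇ f xs‖ ^ 2 := by
  have hz : z - xs - γ • ∇ f xs = (p - xs) + γ • (∇ f p - ∇ f xs) := by
    rw [← hp, smul_sub]; abel
  rw [hz]
  exact norm_add_smul_sq_ge_of_coercive hμ hμL.le hγ hcoef
    (hf.norm_sq_gradient_sub_add_le hd hμL hL p xs)

end Smooth

theorem IsProx.gradient_eq {d : ℕ} {γ : ℝ} {f : EuclideanSpace ℝ (Fin d) → ℝ}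
    {z p : EuclideanSpace ℝ (Fin d)} (h : IsProx γ f z p) (hγ : γ ≠ 0)
    (hf : DifferentiableAt ℝ f p) : ∇ f p = γ⁻¹ • (z - p) := by
  have hmin : IsLocalMin (fun y => γ * f y + ‖y - z‖ ^ 2 / 2) p :=
    Filter.Eventually.of_forall fun y => by simpa only [norm_sub_rev z] using h y
  have hzero := hmin.hasGradientAt_eq_zero
    ((hf.hasGradientAt.const_mul γ).add (hasGradientAt_norm_sub_sq_div_two z p))
  rw [eq_inv_smul_iff₀ hγ]
  rw [← sub_eq_zero, ← hzero]
  abel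

theorem Finset.sum_apply_update {ι β : Type*} [Fintype ι] [DecidableEq ι] (φ : ι → β → ℝ)
    (g : ι → β) (j : ι) (v : β) :
    ∑ i, φ i (Function.update g j v i) = ∑ i, φ i (g i) - φ j (g j) + φ j v := by
  rw [← add_sum_erase _ _ (mem_univ j), ← add_sum_erase _ (fun i => φ i (g i)) (mem_univ j),
    Function.update_self]
  have hrest : ∑ i ∈ univ.erase j, φ i (Function.update g j v i) = ∑ i ∈ univ.erase j, φ i (g i) :=
    sum_congr rfl fun i hi => by rw [Function.update_of_ne (ne_of_mem_erase hi)]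
  rw [hrest]
  ring

theorem Fintype.sum_ofFn_succ {α M : Type*} [Fintype α] [AddCommMonoid M] (F : List α → M)
    (m : ℕ) :
    ∑ ω : Fin (m + 1) → α, F (List.ofFn ω) = ∑ σ : Fin m → α, ∑ j, F (List.ofFn σ ++ [j]) := by
  rw [← (Fin.snocEquiv fun _ => α).sum_comp, Fintype.sum_prod_type, sum_comm]
  refine Finset.sum_congr rfl fun σ _ => Finset.sum_congr rfl fun j _ => ?_
  change F (List.ofFn (Fin.snoc σ j)) = _
  rw [List.ofFn_succ']
  simp [List.concat_eq_append]

theorem Fintype.sum_ofFn_le_pow_mul {α : Type*} [Fintype α] {T : List α → ℝ} {r : ℝ}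
    (hr : 0 ≤ r) (hT : ∀ p, ∑ j, T (p ++ [j]) ≤ r * T p) (m : ℕ) :
    ∑ ω : Fin m → α, T (List.ofFn ω) ≤ r ^ m * T [] := by
  induction m with
  | zero => simp
  | succ m ih =>
    calc ∑ ω : Fin (m + 1) → α, T (List.ofFn ω)
        = ∑ σ : Fin m → α, ∑ j, T (List.ofFn σ ++ [j]) := sum_ofFn_succ T m
      _ ≤ ∑ σ : Fin m → α, r * T (List.ofFn σ) := sum_le_sum fun σ _ => hT _
      _ ≤ r * (r ^ m * T []) := by rw [← mul_sum]; exact mul_le_mul_of_nonneg_left ih hr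
      _ = r ^ (m + 1) * T [] := by ring

theorem pointSaga_stepSize {N μ L γ : ℝ} (hN : 0 < N) (hμ : 0 < μ) (hL : 0 < L)
    (hγ : γ = Real.sqrt ((N - 1) ^ 2 + 4 * N * L / μ) / (2 * L * N) - (1 - 1 / N) / (2 * L)) :
    0 < γ ∧ μ * L * N * γ ^ 2 + (N - 1) * μ * γ = 1 := by
  set s := Real.sqrt ((N - 1) ^ 2 + 4 * N * L / μ)
  have hs : s ^ 2 = (N - 1) ^ 2 + 4 * N * L / μ := Real.sq_sqrt (by positivity)
  have hγ' : γ = (s - (N - 1)) / (2 * L * N) := by rw [hγ]; field_simp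
  have hsN : N - 1 < s := by
    have : (N - 1) ^ 2 < s ^ 2 := by rw [hs]; linarith [show 0 < 4 * N * L / μ by positivity]
    exact (abs_lt_of_sq_lt_sq' this (Real.sqrt_nonneg _)).2
  refine ⟨by rw [hγ']; exact div_pos (by linarith) (by positivity), ?_⟩
  have hμs : μ * s ^ 2 = μ * (N - 1) ^ 2 + 4 * N * L := by rw [hs]; field_simp
  rw [hγ']
  field_simp
  linear_combination hμs

theorem pointSaga_coefficients {N μ L γ c : ℝ} (hL : 0 < L) (hμL : μ ≤ L) (hγ : 0 ≤ γ)
    (hc : c * (μ * L * N) = 1) (hquad : μ * L * N * γ ^ 2 + (N - 1) * μ * γ = 1) :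
    (1 + μ * γ) * c * (μ + L) ≤ γ ^ 2 * (μ + L) + 2 * γ ∧
      (N - 1) * c * (1 + μ * γ) + γ ^ 2 = N * c := by
  have hγsq : γ ^ 2 = c * (1 - (N - 1) * μ * γ) := by
    linear_combination c * hquad - γ ^ 2 * hc
  refine ⟨?_, by rw [hγsq]; ring⟩
  have hNμc : N * μ * c = L⁻¹ := by
    field_simp
    linear_combination hc
  have h2 : N * μ * c * (μ + L) ≤ 2 := by
    rw [hNμc, inv_mul_le_iff₀ hL]
    linarith
  rw [hγsq]
  nlinarith

section PointSaga

variable [CompleteSpace E] {n : ℕ} {μ L : ℝ} {f : Fin n → E → ℝ} {xs : E}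

variable (μ L f xs) in
noncomputable def pointSagaLyapunov (x : E) (g : Fin n → E) : ℝ :=
  (μ * L * n)⁻¹ * ∑ i, ‖g i - ∇ (f i) xs‖ ^ 2 + ‖x - xs‖ ^ 2

theorem norm_sub_sq_le_pointSagaLyapunov (hμ : 0 < μ) (hL : 0 < L) (x : E) (g : Fin n → E) :
    ‖x - xs‖ ^ 2 ≤ pointSagaLyapunov μ L f xs x g := by
  unfold pointSagaLyapunov
  have : 0 ≤ (μ * L * n)⁻¹ * ∑ i, ‖g i - ∇ (f i) xs‖ ^ 2 := by positivity
  linarith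

theorem pointSagaLyapunov_gradient_le (hn : 0 < n) (hμ : 0 < μ) (hL : 0 < L)
    (hlip : ∀ i a b, ‖∇ (f i) a - ∇ (f i) b‖ ≤ L * ‖a - b‖) (x : E) :
    pointSagaLyapunov μ L f xs x (fun i => ∇ (f i) x) ≤ (μ + L) / μ * ‖x - xs‖ ^ 2 := by
  have hsum : ∑ i, ‖∇ (f i) x - ∇ (f i) xs‖ ^ 2 ≤ n * (L ^ 2 * ‖x - xs‖ ^ 2) := by
    calc ∑ i, ‖∇ (f i) x - ∇ (f i) xs‖ ^ 2 ≤ ∑ _i : Fin n, L ^ 2 * ‖x - xs‖ ^ 2 :=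
          sum_le_sum fun i _ => by
            rw [← mul_pow]; exact pow_le_pow_left₀ (norm_nonneg _) (hlip i x xs) 2
      _ = n * (L ^ 2 * ‖x - xs‖ ^ 2) := by simp
  have hn' : (0 : ℝ) < n := Nat.cast_pos.mpr hn
  have hcoef : (μ * L * n)⁻¹ * (n * (L ^ 2 * ‖x - xs‖ ^ 2)) = L / μ * ‖x - xs‖ ^ 2 := by
    field_simp
  have hsplit : (μ + L) / μ * ‖x - xs‖ ^ 2 = L / μ * ‖x - xs‖ ^ 2 + ‖x - xs‖ ^ 2 := by
    field_simp; ring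
  unfold pointSagaLyapunov
  rw [hsplit, ← hcoef]
  gcongr

theorem pointSagaLyapunov_step {γ : ℝ} (hn : 0 < n) (hμ : 0 < μ) (hμL : μ < L) (hγ : 0 < γ)
    (hquad : μ * L * n * γ ^ 2 + (n - 1) * μ * γ = 1)
    (hconv : ∀ i, StrongConvexOn Set.univ μ (f i)) (hdiff : ∀ i, Differentiable ℝ (f i))
    (hlip : ∀ i a b, ‖∇ (f i) a - ∇ (f i) b‖ ≤ L * ‖a - b‖) (hxs : ∑ i, ∇ (f i) xs = 0)
    (x : E) (g x' : Fin n → E)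
    (hx' : ∀ j, ∇ (f j) (x' j) = γ⁻¹ • (x + γ • (g j - (1 / (n : ℝ)) • ∑ i, g i) - x' j)) :
    ∑ j, pointSagaLyapunov μ L f xs (x' j) (Function.update g j (∇ (f j) (x' j))) ≤
      n / (1 + μ * γ) * pointSagaLyapunov μ L f xs x g := by
  have hn' : (0 : ℝ) < n := Nat.cast_pos.mpr hn
  have hL : 0 < L := hμ.trans hμL
  set c := (μ * L * n)⁻¹
  have hc : c * (μ * L * n) = 1 := inv_mul_cancel₀ (by positivity)
  have hV : ∀ y g', pointSagaLyapunov μ L f xs y g' =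
      c * ∑ i, ‖g' i - ∇ (f i) xs‖ ^ 2 + ‖y - xs‖ ^ 2 := fun _ _ => rfl
  clear_value c
  obtain ⟨hcoef, hcS⟩ := pointSaga_coefficients hL hμL.le hγ.le hc hquad
  set h : Fin n → E := fun i => g i - ∇ (f i) xs
  set S := ∑ i, ‖h i‖ ^ 2
  have hmean : (1 / (n : ℝ)) • ∑ i, g i = (Fintype.card (Fin n) : ℝ)⁻¹ • ∑ i, h i := by
    simp [h, sum_sub_distrib, hxs]
  have hper : ∀ j, (1 + μ * γ) * (c * ‖∇ (f j) (x' j) - ∇ (f j) xs‖ ^ 2 + ‖x' j - xs‖ ^ 2) ≤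
      ‖(x - xs) + γ • (h j - (Fintype.card (Fin n) : ℝ)⁻¹ • ∑ i, h i)‖ ^ 2 := by
    intro j
    have hz : (x - xs) + γ • (h j - (Fintype.card (Fin n) : ℝ)⁻¹ • ∑ i, h i) =
        (x + γ • (g j - (1 / (n : ℝ)) • ∑ i, g i)) - xs - γ • ∇ (f j) xs := by
      rw [← hmean]; simp only [h, smul_sub]; abel
    rw [hz]
    refine (hconv j).prox_contraction (hdiff j) hμ hμL (hlip j) hγ.le hcoef ?_
    rw [hx', smul_smul, mul_inv_cancel₀ hγ.ne', one_smul, add_sub_cancel]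
  have hvar := sum_norm_add_smul_sub_mean_sq_le (x - xs) γ h
  have hupdate : ∀ j, pointSagaLyapunov μ L f xs (x' j) (Function.update g j (∇ (f j) (x' j))) =
      c * (S - ‖h j‖ ^ 2) + (c * ‖∇ (f j) (x' j) - ∇ (f j) xs‖ ^ 2 + ‖x' j - xs‖ ^ 2) := by
    intro j
    rw [hV, Finset.sum_apply_update (fun i v => ‖v - ∇ (f i) xs‖ ^ 2)]
    ring
  have h1γ : 0 < 1 + μ * γ := by positivity
  simp only [Fintype.card_fin] at hper hvar
  calc ∑ j, pointSagaLyapunov μ L f xs (x' j) (Function.update g j (∇ (f j) (x' j)))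
      = (n - 1) * c * S +
          ∑ j, (c * ‖∇ (f j) (x' j) - ∇ (f j) xs‖ ^ 2 + ‖x' j - xs‖ ^ 2) := by
        simp only [hupdate, sum_add_distrib, ← mul_sum, sum_sub_distrib, sum_const, card_univ,
          Fintype.card_fin, nsmul_eq_mul]
        ring
    _ ≤ (n - 1) * c * S + (n * ‖x - xs‖ ^ 2 + γ ^ 2 * S) / (1 + μ * γ) := by
        gcongr
        rw [le_div_iff₀' h1γ, mul_sum]
        exact (sum_le_sum fun j _ => hper j).trans hvar
    _ = n / (1 + μ * γ) * pointSagaLyapunov μ L f xs x g := by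
        rw [hV]
        field_simp
        linear_combination S * hcS

end PointSaga

theorem point_saga_smooth_rate {d n : ℕ} (hn : 0 < n) (μ L : ℝ)
    (hμ : 0 < μ) (hμL : μ < L)
    (f : Fin n → EuclideanSpace ℝ (Fin d) → ℝ)
    (hconv : ∀ i, StrongConvexOn Set.univ μ (f i))
    (hdiff : ∀ i, Differentiable ℝ (f i))
    (hlip : ∀ i, LipschitzWith (Real.toNNReal L) (fun z => gradient (f i) z))
    (xstar : EuclideanSpace ℝ (Fin d))
    (hmin : ∀ y, (1 / (n : ℝ)) * ∑ i, f i xstar ≤ (1 / (n : ℝ)) * ∑ i, f i y)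
    (γ κ : ℝ)
    (hγ : γ = Real.sqrt (((n : ℝ) - 1) ^ 2 + 4 * n * L / μ) / (2 * L * n)
        - (1 - 1 / (n : ℝ)) / (2 * L))
    (hκ : κ = μ * γ / (1 + μ * γ))
    (x0 : EuclideanSpace ℝ (Fin d))
    -- the iterates and gradient tables, indexed by the history of sampled indices
    (X : List (Fin n) → EuclideanSpace ℝ (Fin d))
    (G : List (Fin n) → Fin n → EuclideanSpace ℝ (Fin d))
    (hX0 : X [] = x0)
    (hG0 : ∀ i, G [] i = gradient (f i) x0)
    (hstep : ∀ (p : List (Fin n)) (j : Fin n),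
      IsProx γ (f j) (X p + γ • (G p j - (1 / (n : ℝ)) • ∑ i, G p i)) (X (p ++ [j])))
    (hupd : ∀ (p : List (Fin n)) (j : Fin n),
      G (p ++ [j]) j = (1 / γ) •
        ((X p + γ • (G p j - (1 / (n : ℝ)) • ∑ i, G p i)) - X (p ++ [j])))
    (hupd' : ∀ (p : List (Fin n)) (j i : Fin n), i ≠ j → G (p ++ [j]) i = G p i)
    (k : ℕ) :
    (1 / (n : ℝ) ^ k) * ∑ ω : Fin k → Fin n, ‖X (List.ofFn ω) - xstar‖ ^ 2 ≤
      (1 - κ) ^ k * ((μ + L) / μ) * ‖x0 - xstar‖ ^ 2 := by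
  have hn' : (0 : ℝ) < n := Nat.cast_pos.mpr hn
  have hL : 0 < L := hμ.trans hμL
  obtain ⟨hγpos, hquad⟩ := pointSaga_stepSize hn' hμ hL hγ
  have hL' : ∀ i a b, ‖∇ (f i) a - ∇ (f i) b‖ ≤ L * ‖a - b‖ := fun i a b => by
    simpa [dist_eq_norm, Real.coe_toNNReal _ hL.le] using (hlip i).dist_le_mul a b
  have hxs : ∑ i, ∇ (f i) xstar = 0 :=
    IsLocalMin.hasGradientAt_eq_zero
      (Filter.Eventually.of_forall fun y => le_of_mul_le_mul_left (hmin y) (by positivity))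
      (HasGradientAt.sum univ fun i _ => (hdiff i xstar).hasGradientAt)
  have hprox p j := (hstep p j).gradient_eq hγpos.ne' (hdiff j _)
  have htable : ∀ p j, G (p ++ [j]) = Function.update (G p) j (∇ (f j) (X (p ++ [j]))) := by
    intro p j
    funext i
    rcases eq_or_ne i j with rfl | hij
    · rw [Function.update_self, hupd, hprox, one_div]
    · rw [Function.update_of_ne hij, hupd' p j i hij]
  set T := fun p => pointSagaLyapunov μ L f xstar (X p) (G p)
  have hdescent : ∀ p, ∑ j, T (p ++ [j]) ≤ n / (1 + μ * γ) * T p := fun p => by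
    simpa only [T, htable] using pointSagaLyapunov_step hn hμ hμL hγpos hquad hconv hdiff hL' hxs
      (X p) (G p) (fun j => X (p ++ [j])) (hprox p)
  have hT0 : T [] ≤ (μ + L) / μ * ‖x0 - xstar‖ ^ 2 := by
    simpa only [T, hX0, show G [] = _ from funext hG0] using
      pointSagaLyapunov_gradient_le hn hμ hL hL' x0
  have hκ' : 1 - κ = (n : ℝ)⁻¹ * (n / (1 + μ * γ)) := by
    rw [hκ]
    field_simp
    ring
  calc (1 / (n : ℝ) ^ k) * ∑ ω : Fin k → Fin n, ‖X (List.ofFn ω) - xstar‖ ^ 2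
      ≤ (1 / (n : ℝ) ^ k) * ∑ ω : Fin k → Fin n, T (List.ofFn ω) := by
        gcongr with ω
        exact norm_sub_sq_le_pointSagaLyapunov hμ hL _ _
    _ ≤ (1 / (n : ℝ) ^ k) * ((n / (1 + μ * γ)) ^ k * T []) := by
        gcongr
        exact Fintype.sum_ofFn_le_pow_mul (by positivity) hdescent k
    _ = (1 - κ) ^ k * T [] := by rw [hκ', mul_pow, inv_pow, one_div, mul_assoc]
    _ ≤ (1 - κ) ^ k * ((μ + L) / μ) * ‖x0 - xstar‖ ^ 2 := by
        rw [mul_assoc]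
        gcongr
        exact pow_nonneg (by rw [hκ']; positivity) k
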